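/- Let γ, σ > 0, assume d = D, set δ := min{ℓ/θ, γ/σ}, and let (S, I, P) be a positive classical solution of the general parabolic Dirichlet problem (1.2) on Ω × (0, ∞). Then for all x ∈ Ω̄ and t ≥ 0, P(x,t) ≤ (1/δ) · max{ max_{Ω̄} (S₀ + I₀ + δP₀), (a + ρ − b)²/(4cρ) }. -/

import Mathlib

/-!
Put `δ = min (ℓ/θ) (γ/σ)` and `W = S + I + δ P`. Because `d = D`, the three equations add up to
`W_t - dΔW = (a + ρ - b)(S + I) - c(S + I)² - ρW - (ℓ - δθ) S P - (γ - δσ) I P`, and the choice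
of `δ` makes the last two terms nonpositive, so `W_t - dΔW ≤ (a + ρ - b)²/(4c) - ρW`. Thus `W` is a
strict subsolution wherever it exceeds `(a + ρ - b)²/(4cρ)`. At a space-time maximum of `W` over
`Ω̄ × [0, T]` lying in `Ω × (0, T]` one has `W_t ≥ 0` and `ΔW ≤ 0`, so this maximum is at most the
larger of that level, the initial maximum, and the boundary value `0`. Finally `δ P ≤ W`.
-/

open Set Filter Topology

noncomputable def vlap {N : ℕ} (f : EuclideanSpace ℝ (Fin N) → ℝ)
    (x : EuclideanSpace ℝ (Fin N)) : ℝ :=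
  ∑ i : Fin N, fderiv ℝ (fun y => fderiv ℝ f y (EuclideanSpace.single i 1)) x
    (EuclideanSpace.single i 1)

/-- `u` is a positive classical solution component of a parabolic Dirichlet problem on
`Ω × (0, ∞)`: continuous on `closure Ω × [0, ∞)`, twice continuously differentiable in
space and once in time, strictly positive in `Ω × (0, ∞)`, vanishing on
`frontier Ω × (0, ∞)`, with positive initial data in `Ω`. -/
def ParaSol {N : ℕ} (Ω : Set (EuclideanSpace ℝ (Fin N)))
    (u : EuclideanSpace ℝ (Fin N) → ℝ → ℝ) : Prop :=
  ContinuousOn (fun p : EuclideanSpace ℝ (Fin N) × ℝ => u p.1 p.2) (closure Ω ×ˢ Ici 0) ∧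
  (∀ t > (0 : ℝ), ContDiffOn ℝ 2 (fun y => u y t) Ω) ∧
  (∀ x ∈ Ω, ContDiffOn ℝ 1 (fun s => u x s) (Ioi 0)) ∧
  (∀ x ∈ Ω, ∀ t > (0 : ℝ), 0 < u x t) ∧
  (∀ x ∈ frontier Ω, ∀ t > (0 : ℝ), u x t = 0) ∧
  (∀ x ∈ Ω, 0 < u x 0)

theorem IsLocalMax.deriv_deriv_nonpos {f : ℝ → ℝ} {x : ℝ} (h : IsLocalMax f x)
    (hc : ContinuousAt f x) : deriv (deriv f) x ≤ 0 := by
  by_contra! hpos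
  have hmin := isLocalMin_of_deriv_deriv_pos hpos h.deriv_eq_zero hc
  have hconst : f =ᶠ[𝓝 x] fun _ => f x := by
    filter_upwards [h, hmin] with y hmax hmin using le_antisymm hmax hmin
  have hderiv : deriv f =ᶠ[𝓝 x] fun _ => 0 := by
    filter_upwards [hconst.deriv] with y hy
    rw [hy, deriv_const]
  rw [hderiv.deriv_eq, deriv_const] at hpos
  exact hpos.false

theorem IsLocalMaxOn.deriv_nonneg_of_Iic {f : ℝ → ℝ} {a : ℝ} (h : IsLocalMaxOn f (Iic a) a)
    (hf : DifferentiableAt ℝ f a) : 0 ≤ deriv f a := by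
  have hseg : segment ℝ a (a + -1) ⊆ Iic a := by
    rw [segment_symm, segment_eq_Icc (by linarith)]
    exact Icc_subset_Iic_self
  simpa using h.hasFDerivWithinAt_nonpos hf.hasFDerivAt.hasFDerivWithinAt
    (mem_posTangentConeAt_of_segment_subset hseg)

section SecondDirectionalDerivative

variable {E : Type*} [NormedAddCommGroup E] [NormedSpace ℝ E] {f g : E → ℝ} {x : E}

theorem ContDiffAt.differentiableAt_fderiv_apply (hf : ContDiffAt ℝ 2 f x) (v : E) :
    DifferentiableAt ℝ (fun y => fderiv ℝ f y v) x :=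
  ((hf.fderiv_right (m := 1) le_rfl).differentiableAt (by norm_num)).clm_apply
    (differentiableAt_const v)

theorem ContDiffAt.eventually_differentiableAt (hf : ContDiffAt ℝ 2 f x) :
    ∀ᶠ y in 𝓝 x, DifferentiableAt ℝ f y :=
  (hf.eventually (by simp)).mono fun _ hy => hy.differentiableAt (by norm_num)

theorem IsLocalMax.fderiv_fderiv_apply_nonpos (h : IsLocalMax f x) (hf : ContDiffAt ℝ 2 f x)
    (v : E) : fderiv ℝ (fun y => fderiv ℝ f y v) x v ≤ 0 := by
  set l : ℝ → E := fun s => x + s • v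
  have hl : ∀ s, HasDerivAt l v s := fun s => by
    simpa only [id, one_smul] using ((hasDerivAt_id s).smul_const v).const_add x
  have hl0 : l 0 = x := by simp [l]
  have hlc : Continuous l := by fun_prop
  have hderiv : deriv (f ∘ l) =ᶠ[𝓝 0] (fun y => fderiv ℝ f y v) ∘ l := by
    have hdiff : ∀ᶠ s in 𝓝 0, DifferentiableAt ℝ f (l s) :=
      (hlc.tendsto 0).eventually (hl0 ▸ hf.eventually_differentiableAt)
    filter_upwards [hdiff] with s hs using (hs.hasFDerivAt.comp_hasDerivAt s (hl s)).deriv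
  have hsecond : HasDerivAt ((fun y => fderiv ℝ f y v) ∘ l)
      (fderiv ℝ (fun y => fderiv ℝ f y v) x v) 0 := by
    have hd : DifferentiableAt ℝ (fun y => fderiv ℝ f y v) (l 0) := by
      rw [hl0]
      exact hf.differentiableAt_fderiv_apply v
    simpa [hl0] using hd.hasFDerivAt.comp_hasDerivAt 0 (hl 0)
  rw [← hsecond.deriv, ← hderiv.deriv_eq]
  exact (hl0 ▸ h).comp_continuous hlc.continuousAt |>.deriv_deriv_nonpos
    ((hl0 ▸ hf.continuousAt).comp hlc.continuousAt)

theorem fderiv_fderiv_apply_add (hf : ContDiffAt ℝ 2 f x) (hg : ContDiffAt ℝ 2 g x) (v : E) :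
    fderiv ℝ (fun y => fderiv ℝ (fun z => f z + g z) y v) x v =
      fderiv ℝ (fun y => fderiv ℝ f y v) x v + fderiv ℝ (fun y => fderiv ℝ g y v) x v := by
  have hfirst : (fun y => fderiv ℝ (fun z => f z + g z) y v) =ᶠ[𝓝 x]
      fun y => fderiv ℝ f y v + fderiv ℝ g y v := by
    filter_upwards [hf.eventually_differentiableAt, hg.eventually_differentiableAt]
      with y hfy hgy
    rw [fderiv_fun_add hfy hgy, add_apply]
  rw [hfirst.fderiv_eq, fderiv_fun_add (hf.differentiableAt_fderiv_apply v)
    (hg.differentiableAt_fderiv_apply v), add_apply]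

theorem fderiv_fderiv_apply_const_mul (hf : ContDiffAt ℝ 2 f x) (c : ℝ) (v : E) :
    fderiv ℝ (fun y => fderiv ℝ (fun z => c * f z) y v) x v =
      c * fderiv ℝ (fun y => fderiv ℝ f y v) x v := by
  have hfirst : (fun y => fderiv ℝ (fun z => c * f z) y v) =ᶠ[𝓝 x]
      fun y => c * fderiv ℝ f y v := by
    filter_upwards [hf.eventually_differentiableAt] with y hfy
    rw [fderiv_const_mul hfy, smul_apply, smul_eq_mul]
  rw [hfirst.fderiv_eq, fderiv_const_mul (hf.differentiableAt_fderiv_apply v), smul_apply,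
    smul_eq_mul]

end SecondDirectionalDerivative

section Laplacian

variable {N : ℕ} {f g : EuclideanSpace ℝ (Fin N) → ℝ} {x : EuclideanSpace ℝ (Fin N)}

theorem vlap_add (hf : ContDiffAt ℝ 2 f x) (hg : ContDiffAt ℝ 2 g x) :
    vlap (fun z => f z + g z) x = vlap f x + vlap g x := by
  simp only [vlap, fderiv_fderiv_apply_add hf hg, Finset.sum_add_distrib]

theorem vlap_const_mul (hf : ContDiffAt ℝ 2 f x) (c : ℝ) :
    vlap (fun z => c * f z) x = c * vlap f x := by
  simp only [vlap, fderiv_fderiv_apply_const_mul hf, Finset.mul_sum]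

theorem IsLocalMax.vlap_nonpos (h : IsLocalMax f x) (hf : ContDiffAt ℝ 2 f x) : vlap f x ≤ 0 :=
  Finset.sum_nonpos fun _ _ => h.fderiv_fderiv_apply_nonpos hf _

end Laplacian

noncomputable def heatOp {N : ℕ} (d : ℝ) (u : EuclideanSpace ℝ (Fin N) → ℝ → ℝ)
    (x : EuclideanSpace ℝ (Fin N)) (t : ℝ) : ℝ :=
  deriv (fun s => u x s) t - d * vlap (fun y => u y t) x

section HeatOperator

variable {N : ℕ} {Ω : Set (EuclideanSpace ℝ (Fin N))} {u v w : EuclideanSpace ℝ (Fin N) → ℝ → ℝ}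
  {d : ℝ} {x : EuclideanSpace ℝ (Fin N)} {t : ℝ}

theorem heatOp_add (hu : ContDiffAt ℝ 2 (fun y => u y t) x)
    (hv : ContDiffAt ℝ 2 (fun y => v y t) x) (hu' : DifferentiableAt ℝ (fun s => u x s) t)
    (hv' : DifferentiableAt ℝ (fun s => v x s) t) :
    heatOp d (fun y s => u y s + v y s) x t = heatOp d u x t + heatOp d v x t := by
  simp only [heatOp, deriv_fun_add hu' hv', vlap_add hu hv]
  ring

theorem heatOp_const_mul (hu : ContDiffAt ℝ 2 (fun y => u y t) x)
    (hu' : DifferentiableAt ℝ (fun s => u x s) t) (c : ℝ) :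
    heatOp d (fun y s => c * u y s) x t = c * heatOp d u x t := by
  simp only [heatOp, deriv_const_mul c hu', vlap_const_mul hu c]
  ring

theorem heatOp_nonneg_of_isMaxOn (hd : 0 ≤ d) {K : Set (EuclideanSpace ℝ (Fin N))} {J : Set ℝ}
    (hK : K ∈ 𝓝 x) (hJ : J ∈ 𝓝[≤] t)
    (hmax : IsMaxOn (fun p : _ × ℝ => w p.1 p.2) (K ×ˢ J) (x, t))
    (hw : ContDiffAt ℝ 2 (fun y => w y t) x) (hw' : DifferentiableAt ℝ (fun s => w x s) t) :
    0 ≤ heatOp d w x t := by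
  have hspace : IsLocalMax (fun y => w y t) x := by
    filter_upwards [hK] with y hy using
      hmax (show (y, t) ∈ K ×ˢ J from ⟨hy, mem_of_mem_nhdsWithin (mem_Iic.2 le_rfl) hJ⟩)
  have htime : IsLocalMaxOn (fun s => w x s) (Iic t) t := by
    filter_upwards [hJ] with s hs using
      hmax (show (x, s) ∈ K ×ˢ J from ⟨mem_of_mem_nhds hK, hs⟩)
  have hlap := hspace.vlap_nonpos hw
  have hderiv := htime.deriv_nonneg_of_Iic hw'
  unfold heatOp
  nlinarith

theorem le_of_heatOp_neg_of_lt (hΩ : IsOpen Ω) (hΩbd : Bornology.IsBounded Ω) {M : ℝ}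
    (hd : 0 ≤ d)
    (hcont : ContinuousOn (fun p : EuclideanSpace ℝ (Fin N) × ℝ => w p.1 p.2)
      (closure Ω ×ˢ Ici 0))
    (hw : ∀ t > 0, ContDiffOn ℝ 2 (fun y => w y t) Ω)
    (hw' : ∀ x ∈ Ω, DifferentiableOn ℝ (fun s => w x s) (Ioi 0))
    (hinit : ∀ x ∈ closure Ω, w x 0 ≤ M) (hbdry : ∀ x ∈ frontier Ω, ∀ t > 0, w x t ≤ M)
    (hsub : ∀ x ∈ Ω, ∀ t > 0, M < w x t → heatOp d w x t < 0) :
    ∀ x ∈ closure Ω, ∀ t ≥ 0, w x t ≤ M := by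
  intro x hx t ht
  obtain ⟨⟨x₀, t₀⟩, ⟨hx₀, ht₀⟩, hmax⟩ :=
    (hΩbd.isCompact_closure.prod isCompact_Icc).exists_isMaxOn ⟨(x, t), hx, ht, le_rfl⟩
      (hcont.mono (prod_mono subset_rfl Icc_subset_Ici_self))
  refine (hmax ⟨hx, ht, le_rfl⟩).trans (not_lt.1 fun hlt => ?_)
  have ht₀pos : 0 < t₀ := ht₀.1.lt_of_ne fun h => (hinit x₀ hx₀).not_gt (h ▸ hlt)
  have hx₀Ω : x₀ ∈ Ω := by
    by_contra hout
    exact (hbdry x₀ (hΩ.frontier_eq ▸ ⟨hx₀, hout⟩) t₀ ht₀pos).not_gt hlt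
  refine (hsub x₀ hx₀Ω t₀ ht₀pos hlt).not_ge (heatOp_nonneg_of_isMaxOn hd (hΩ.mem_nhds hx₀Ω)
    (mem_of_superset (Icc_mem_nhdsLE ht₀pos) (Icc_subset_Icc_right ht₀.2))
    (hmax.on_subset (prod_mono subset_closure subset_rfl)) ?_ ?_)
  · exact (hw t₀ ht₀pos).contDiffAt (hΩ.mem_nhds hx₀Ω)
  · exact (hw' x₀ hx₀Ω).differentiableAt (Ioi_mem_nhds ht₀pos)

end HeatOperator

namespace ParaSol

variable {N : ℕ} {Ω : Set (EuclideanSpace ℝ (Fin N))} {u v w : EuclideanSpace ℝ (Fin N) → ℝ → ℝ}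

theorem continuousOn (hu : ParaSol Ω u) :
    ContinuousOn (fun p : EuclideanSpace ℝ (Fin N) × ℝ => u p.1 p.2) (closure Ω ×ˢ Ici 0) :=
  hu.1

theorem contDiffOn_space (hu : ParaSol Ω u) : ∀ t > 0, ContDiffOn ℝ 2 (fun y => u y t) Ω :=
  hu.2.1

theorem contDiffOn_time (hu : ParaSol Ω u) : ∀ x ∈ Ω, ContDiffOn ℝ 1 (fun s => u x s) (Ioi 0) :=
  hu.2.2.1

theorem pos (hu : ParaSol Ω u) : ∀ x ∈ Ω, ∀ t > 0, 0 < u x t :=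
  hu.2.2.2.1

theorem eq_zero_of_mem_frontier (hu : ParaSol Ω u) : ∀ x ∈ frontier Ω, ∀ t > 0, u x t = 0 :=
  hu.2.2.2.2.1

theorem nonneg (hu : ParaSol Ω u) : ∀ x ∈ closure Ω, ∀ t ≥ 0, 0 ≤ u x t := by
  have hcl : closure (Ω ×ˢ Ioi (0 : ℝ)) = closure Ω ×ˢ Ici 0 := by
    rw [closure_prod_eq, closure_Ioi]
  intro x hx t ht
  exact le_on_closure (f := fun _ => 0) (g := fun p : _ × ℝ => u p.1 p.2)
    (fun p hp => (hu.pos p.1 hp.1 p.2 hp.2).le) continuousOn_const (hcl ▸ hu.continuousOn)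
    (hcl ▸ ⟨hx, ht⟩ : (x, t) ∈ closure (Ω ×ˢ Ioi (0 : ℝ)))

theorem heatOp_add_add_const_mul (hΩ : IsOpen Ω) (hu : ParaSol Ω u) (hv : ParaSol Ω v)
    (hw : ParaSol Ω w) (d c : ℝ) {x : EuclideanSpace ℝ (Fin N)} (hx : x ∈ Ω) {t : ℝ}
    (ht : 0 < t) :
    heatOp d (fun y s => u y s + v y s + c * w y s) x t =
      heatOp d u x t + heatOp d v x t + c * heatOp d w x t := by
  have hx' : ∀ {f : EuclideanSpace ℝ (Fin N) → ℝ → ℝ}, ParaSol Ω f →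
      ContDiffAt ℝ 2 (fun y => f y t) x := fun hf =>
    (hf.contDiffOn_space t ht).contDiffAt (hΩ.mem_nhds hx)
  have ht' : ∀ {f : EuclideanSpace ℝ (Fin N) → ℝ → ℝ}, ParaSol Ω f →
      DifferentiableAt ℝ (fun s => f x s) t := fun hf =>
    ((hf.contDiffOn_time x hx).contDiffAt (Ioi_mem_nhds ht)).differentiableAt (by norm_num)
  rw [heatOp_add (u := fun y s => u y s + v y s) (v := fun y s => c * w y s)
      ((hx' hu).add (hx' hv)) (contDiffAt_const.mul (hx' hw)) ((ht' hu).add (ht' hv))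
      ((ht' hw).const_mul c),
    heatOp_add (hx' hu) (hx' hv) (ht' hu) (ht' hv), heatOp_const_mul (hx' hw) (ht' hw)]

theorem add_add_const_mul_le (hΩ : IsOpen Ω) (hΩbd : Bornology.IsBounded Ω) (hu : ParaSol Ω u)
    (hv : ParaSol Ω v) (hw : ParaSol Ω w) {c d M : ℝ} (hd : 0 ≤ d) (hM : 0 ≤ M)
    (hsub : ∀ x ∈ Ω, ∀ t > 0,
      max (sSup ((fun y => u y 0 + v y 0 + c * w y 0) '' closure Ω)) M
        < u x t + v x t + c * w x t →
      heatOp d u x t + heatOp d v x t + c * heatOp d w x t < 0) :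
    ∀ x ∈ closure Ω, ∀ t ≥ 0, u x t + v x t + c * w x t ≤
      max (sSup ((fun y => u y 0 + v y 0 + c * w y 0) '' closure Ω)) M := by
  have hcont : ContinuousOn (fun p : EuclideanSpace ℝ (Fin N) × ℝ =>
      u p.1 p.2 + v p.1 p.2 + c * w p.1 p.2) (closure Ω ×ˢ Ici 0) :=
    (hu.continuousOn.add hv.continuousOn).add (continuousOn_const.mul hw.continuousOn)
  have hbdd : BddAbove ((fun y => u y 0 + v y 0 + c * w y 0) '' closure Ω) :=
    hΩbd.isCompact_closure.bddAbove_image <| hcont.comp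
      (continuous_id.prodMk continuous_const).continuousOn fun y hy => ⟨hy, self_mem_Ici⟩
  refine le_of_heatOp_neg_of_lt (w := fun y s => u y s + v y s + c * w y s) hΩ hΩbd hd hcont
    (fun t ht => ((hu.contDiffOn_space t ht).add (hv.contDiffOn_space t ht)).add
      (contDiffOn_const.mul (hw.contDiffOn_space t ht)))
    (fun x hx => (((hu.contDiffOn_time x hx).add (hv.contDiffOn_time x hx)).add
      (contDiffOn_const.mul (hw.contDiffOn_time x hx))).differentiableOn (by norm_num))
    (fun x hx => le_max_of_le_left (le_csSup hbdd ⟨x, hx, rfl⟩)) (fun x hx t ht => ?_)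
    (fun x hx t ht hlt => heatOp_add_add_const_mul hΩ hu hv hw d c hx ht ▸ hsub x hx t ht hlt)
  rw [hu.eq_zero_of_mem_frontier x hx t ht, hv.eq_zero_of_mem_frontier x hx t ht,
    hw.eq_zero_of_mem_frontier x hx t ht]
  simpa using le_max_of_le_right hM

end ParaSol

theorem reaction_combination_neg {a b c k el gam th sig rh δ S I P : ℝ} (hc : 0 < c)
    (hrh : 0 < rh) (hS : 0 ≤ S) (hI : 0 ≤ I) (hP : 0 ≤ P) (hδth : δ * th ≤ el)
    (hδsig : δ * sig ≤ gam) (hlt : (a + rh - b) ^ 2 / (4 * c * rh) < S + I + δ * P) :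
    (a * (S + I) - b * S - c * (S + I) * S - k * I * S - el * S * P)
      + (k * I * S - b * I - c * (S + I) * I - gam * I * P)
      + δ * (th * S * P + sig * I * P - rh * P) < 0 := by
  have hquad : (a + rh - b) * (S + I) - c * (S + I) ^ 2 ≤ (a + rh - b) ^ 2 / (4 * c) := by
    rw [le_div_iff₀ (by positivity)]
    nlinarith [sq_nonneg (2 * c * (S + I) - (a + rh - b))]
  have hlevel : (a + rh - b) ^ 2 / (4 * c) < rh * (S + I + δ * P) := by
    have hM : (a + rh - b) ^ 2 / (4 * c) = rh * ((a + rh - b) ^ 2 / (4 * c * rh)) := by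
      field_simp
    rw [hM]
    exact mul_lt_mul_of_pos_left hlt hrh
  nlinarith [mul_nonneg (sub_nonneg.2 hδth) (mul_nonneg hS hP),
    mul_nonneg (sub_nonneg.2 hδsig) (mul_nonneg hI hP)]

theorem stmt16_general {N : ℕ} (Ω : Set (EuclideanSpace ℝ (Fin N)))
    (hΩopen : IsOpen Ω) (hΩbd : Bornology.IsBounded Ω)
    (a b c k el gam th sig rh d D : ℝ) (hc : 0 < c)
    (hel : 0 < el) (hgam : 0 < gam) (hth : 0 < th) (hsig : 0 < sig)
    (hrh : 0 < rh) (hd : 0 < d) (hdD : d = D)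
    (S I P : EuclideanSpace ℝ (Fin N) → ℝ → ℝ)
    (hS : ParaSol Ω S) (hI : ParaSol Ω I) (hP : ParaSol Ω P)
    (heqS : ∀ x ∈ Ω, ∀ t > (0 : ℝ),
      deriv (fun s => S x s) t - d * vlap (fun y => S y t) x
        = a * (S x t + I x t) - b * S x t - c * (S x t + I x t) * S x t
          - k * I x t * S x t - el * S x t * P x t)
    (heqI : ∀ x ∈ Ω, ∀ t > (0 : ℝ),
      deriv (fun s => I x s) t - d * vlap (fun y => I y t) x
        = k * I x t * S x t - b * I x t - c * (S x t + I x t) * I x t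
          - gam * I x t * P x t)
    (heqP : ∀ x ∈ Ω, ∀ t > (0 : ℝ),
      deriv (fun s => P x s) t - D * vlap (fun y => P y t) x
        = th * S x t * P x t + sig * I x t * P x t - rh * P x t) :
    ∀ x ∈ closure Ω, ∀ t ≥ (0 : ℝ),
      P x t ≤ (1 / min (el / th) (gam / sig)) *
        max (sSup ((fun y => S y 0 + I y 0 + min (el / th) (gam / sig) * P y 0) ''
              closure Ω))
          ((a + rh - b) ^ 2 / (4 * c * rh)) := by
  set δ := min (el / th) (gam / sig)
  have hδ : 0 < δ := lt_min (div_pos hel hth) (div_pos hgam hsig)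
  have hW := hS.add_add_const_mul_le hΩopen hΩbd hI hP hd.le
    (M := (a + rh - b) ^ 2 / (4 * c * rh)) (by positivity) fun x hx t ht hlt => by
      have eS : heatOp d S x t = _ := heqS x hx t ht
      have eI : heatOp d I x t = _ := heqI x hx t ht
      have eP : heatOp d P x t = _ := hdD ▸ heqP x hx t ht
      rw [eS, eI, eP]
      exact reaction_combination_neg hc hrh (hS.pos x hx t ht).le
        (hI.pos x hx t ht).le (hP.pos x hx t ht).le
        ((le_div_iff₀ hth).1 (min_le_left _ _)) ((le_div_iff₀ hsig).1 (min_le_right _ _))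
        ((le_max_right _ _).trans_lt hlt)
  intro x hx t ht
  rw [one_div, inv_mul_eq_div, le_div_iff₀' hδ]
  linarith [hW x hx t ht, hS.nonneg x hx t ht, hI.nonneg x hx t ht]

/-- A priori bound for P when d = D: with δ = min{ℓ/θ, γ/σ},
P ≤ (1/δ) max { max_Ω̄ (S₀ + I₀ + δP₀), (a+ρ-b)²/(4cρ) } on Ω̄ × [0, ∞). -/
theorem stmt16 {N : ℕ} (hN : 1 ≤ N) (Ω : Set (EuclideanSpace ℝ (Fin N)))
    (hΩopen : IsOpen Ω) (hΩconn : IsConnected Ω) (hΩbd : Bornology.IsBounded Ω)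
    (a b c k el gam th sig rh d D : ℝ) (ha : 0 < a) (hb : 0 < b) (hc : 0 < c)
    (hk : 0 < k) (hel : 0 < el) (hgam : 0 < gam) (hth : 0 < th) (hsig : 0 < sig)
    (hrh : 0 < rh) (hd : 0 < d) (hD : 0 < D) (hab : b < a) (hdD : d = D)
    (S I P : EuclideanSpace ℝ (Fin N) → ℝ → ℝ)
    (hS : ParaSol Ω S) (hI : ParaSol Ω I) (hP : ParaSol Ω P)
    (heqS : ∀ x ∈ Ω, ∀ t > (0 : ℝ),
      deriv (fun s => S x s) t - d * vlap (fun y => S y t) x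
        = a * (S x t + I x t) - b * S x t - c * (S x t + I x t) * S x t
          - k * I x t * S x t - el * S x t * P x t)
    (heqI : ∀ x ∈ Ω, ∀ t > (0 : ℝ),
      deriv (fun s => I x s) t - d * vlap (fun y => I y t) x
        = k * I x t * S x t - b * I x t - c * (S x t + I x t) * I x t
          - gam * I x t * P x t)
    (heqP : ∀ x ∈ Ω, ∀ t > (0 : ℝ),
      deriv (fun s => P x s) t - D * vlap (fun y => P y t) x
        = th * S x t * P x t + sig * I x t * P x t - rh * P x t) :
    ∀ x ∈ closure Ω, ∀ t ≥ (0 : ℝ),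
      P x t ≤ (1 / min (el / th) (gam / sig)) *
        max (sSup ((fun y => S y 0 + I y 0 + min (el / th) (gam / sig) * P y 0) ''
              closure Ω))
          ((a + rh - b) ^ 2 / (4 * c * rh)) :=
  stmt16_general Ω hΩopen hΩbd a b c k el gam th sig rh d D hc hel hgam hth hsig hrh hd hdD S I P hS
    hI hP heqS heqI heqP
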